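/- Let f be a function of class C¹ mapping (0,1] into (0,1] with f(1) = 1, non-decreasing on (0,1], submultiplicative on (0,1], and with x ↦ x·f'(x) non-decreasing on (0,1] (so that f is a Weierstrass function on (0,1]). Then, for every real α > 1, the function F_α(x) := f(x)^α is a Weierstrass function on (0,1]: F_α(x) + F_α(y) - 1 ≤ F_α(x·y) ≤ F_α(x)·F_α(y) for all x, y ∈ (0,1]. -/

import Mathlib

/-!
The upper bound is submultiplicativity raised to the power `α`. For the lower bound, if
`x ↦ x g'(x)` is non-decreasing on `(0,1]`, then for fixed `y` the function
`x ↦ g(x y) - g(x)` has derivative `(x y g'(x y) - x g'(x)) / x ≤ 0`, so it is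
non-increasing and comparing `x` with `1` gives `g x + g y ≤ g 1 + g (x y)`.
For `g = f ^ α` one has `x g'(x) = α (x f'(x)) f(x) ^ (α - 1)`, a product of two
non-negative non-decreasing functions once `α ≥ 1`.
-/

open Set

theorem mul_mem_Ioc_zero_one {x y : ℝ} (hx : x ∈ Ioc (0:ℝ) 1) (hy : y ∈ Ioc (0:ℝ) 1) :
    x * y ∈ Ioc (0:ℝ) 1 :=
  ⟨mul_pos hx.1 hy.1, mul_le_one₀ hx.2 hy.1.le hy.2⟩

theorem add_le_add_mul_of_monotoneOn_mul_deriv {g g' : ℝ → ℝ}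
    (hg : ∀ x ∈ Ioc (0:ℝ) 1, HasDerivWithinAt g (g' x) (Ioc 0 1) x)
    (hmono : MonotoneOn (fun x => x * g' x) (Ioc 0 1))
    {x y : ℝ} (hx : x ∈ Ioc (0:ℝ) 1) (hy : y ∈ Ioc (0:ℝ) 1) :
    g x + g y ≤ g 1 + g (x * y) := by
  have hmaps : MapsTo (· * y) (Ioc (0:ℝ) 1) (Ioc 0 1) := fun z hz => mul_mem_Ioc_zero_one hz hy
  have hgc : ContinuousOn g (Ioc 0 1) := fun z hz => (hg z hz).continuousWithinAt
  have hanti : AntitoneOn (fun z => g (z * y) - g z) (Ioc 0 1) := by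
    refine antitoneOn_of_hasDerivWithinAt_nonpos (f' := fun z => g' (z * y) * y - g' z)
      (convex_Ioc 0 1) ((hgc.comp (continuous_mul_const y).continuousOn hmaps).sub hgc)
      (fun z hz => ?_) (fun z hz => ?_) <;> rw [interior_Ioc] at *
    · have hz' := Ioo_subset_Ioc_self hz
      exact ((hg _ (hmaps hz')).comp z (hasDerivAt_mul_const y).hasDerivWithinAt
        (hmaps.mono_left Ioo_subset_Ioc_self)).sub ((hg z hz').mono Ioo_subset_Ioc_self)
    · have hz' := Ioo_subset_Ioc_self hz
      have key : z * (g' (z * y) * y) ≤ z * g' z := by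
        linarith [hmono (hmaps hz') hz' (mul_le_of_le_one_right hz.1.le hy.2)]
      linarith [le_of_mul_le_mul_left key hz.1]
  have h := hanti hx ⟨one_pos, le_rfl⟩ hx.2
  simp only [one_mul] at h
  linarith

theorem weierstrass_rpow_general (f f' : ℝ → ℝ)
    (hderiv : ∀ x ∈ Set.Ioc (0:ℝ) 1, HasDerivWithinAt f (f' x) (Set.Ioc 0 1) x)
    (hf_maps : Set.MapsTo f (Set.Ioc 0 1) (Set.Ioc 0 1))
    (hf1 : f 1 = 1)
    (hfmono : MonotoneOn f (Set.Ioc 0 1))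
    (hsub : ∀ x ∈ Set.Ioc (0:ℝ) 1, ∀ y ∈ Set.Ioc (0:ℝ) 1, f (x * y) ≤ f x * f y)
    (hH : MonotoneOn (fun x => x * f' x) (Set.Ioc 0 1))
    (α : ℝ) (hα : 1 < α) :
    ∀ x ∈ Set.Ioc (0:ℝ) 1, ∀ y ∈ Set.Ioc (0:ℝ) 1,
      f x ^ α + f y ^ α - 1 ≤ f (x * y) ^ α ∧ f (x * y) ^ α ≤ f x ^ α * f y ^ α := by
  have hf_nonneg : ∀ x ∈ Ioc (0:ℝ) 1, 0 ≤ f x := fun x hx => (hf_maps hx).1.le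
  have hf'_nonneg : ∀ x ∈ Ioc (0:ℝ) 1, 0 ≤ f' x := fun x hx =>
    (hderiv x hx).nonneg_of_monotoneOn (uniqueDiffOn_Ioc 0 1 x hx).accPt hfmono
  have hderiv_rpow : ∀ x ∈ Ioc (0:ℝ) 1,
      HasDerivWithinAt (fun x => f x ^ α) (f' x * α * f x ^ (α - 1)) (Ioc 0 1) x :=
    fun x hx => (hderiv x hx).rpow_const (Or.inr hα.le)
  have hmono_rpow : MonotoneOn (fun x => α * f x ^ (α - 1)) (Ioc 0 1) := fun x hx y hy hxy =>
    mul_le_mul_of_nonneg_left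
      (Real.rpow_le_rpow (hf_nonneg x hx) (hfmono hx hy hxy) (by linarith)) (by linarith)
  have hmono_mul_deriv :
      MonotoneOn (fun x => x * (f' x * α * f x ^ (α - 1))) (Ioc 0 1) := by
    have hprod := hH.mul hmono_rpow (fun x hx => mul_nonneg hx.1.le (hf'_nonneg x hx))
      (fun x hx => mul_nonneg (by linarith) (Real.rpow_nonneg (hf_nonneg x hx) _))
    exact fun x hx y hy hxy => by simpa only [Pi.mul_apply, mul_assoc] using hprod hx hy hxy
  intro x hx y hy
  constructor
  · have hlower := add_le_add_mul_of_monotoneOn_mul_deriv hderiv_rpow hmono_mul_deriv hx hy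
    rw [hf1, Real.one_rpow] at hlower
    linarith
  · calc f (x * y) ^ α ≤ (f x * f y) ^ α :=
          Real.rpow_le_rpow (hf_nonneg _ (mul_mem_Ioc_zero_one hx hy)) (hsub x hx y hy)
            (by linarith)
      _ = f x ^ α * f y ^ α := Real.mul_rpow (hf_nonneg x hx) (hf_nonneg y hy)

/-- If `f` is a `C¹` function mapping `(0,1]` into `(0,1]` with `f 1 = 1`, non-decreasing
and submultiplicative on `(0,1]`, and with `x ↦ x * f' x` non-decreasing on `(0,1]`
(so `f` is a Weierstrass function on `(0,1]`), then for every real `α > 1` the function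
`F_α x = f x ^ α` is a Weierstrass function on `(0,1]`. -/
theorem weierstrass_rpow (f f' : ℝ → ℝ)
    (hderiv : ∀ x ∈ Set.Ioc (0:ℝ) 1, HasDerivWithinAt f (f' x) (Set.Ioc 0 1) x)
    (hcont : ContinuousOn f' (Set.Ioc 0 1))
    (hf_maps : Set.MapsTo f (Set.Ioc 0 1) (Set.Ioc 0 1))
    (hf1 : f 1 = 1)
    (hfmono : MonotoneOn f (Set.Ioc 0 1))
    (hsub : ∀ x ∈ Set.Ioc (0:ℝ) 1, ∀ y ∈ Set.Ioc (0:ℝ) 1, f (x * y) ≤ f x * f y)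
    (hH : MonotoneOn (fun x => x * f' x) (Set.Ioc 0 1))
    (α : ℝ) (hα : 1 < α) :
    ∀ x ∈ Set.Ioc (0:ℝ) 1, ∀ y ∈ Set.Ioc (0:ℝ) 1,
      f x ^ α + f y ^ α - 1 ≤ f (x * y) ^ α ∧ f (x * y) ^ α ≤ f x ^ α * f y ^ α :=
  weierstrass_rpow_general f f' hderiv hf_maps hf1 hfmono hsub hH α hα
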